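/- arXiv:2208.07942 — 6 statements merged into one kernel-verified Lean document; each statement's English description precedes it below -/
import Mathlib

section
/- Let R be a commutative semilocal ring and x ∈ R. If the cyclic R-module Rx is cyclically presented, i.e., Rx ≅ R/I for some principal ideal I of R, then the annihilator Ann(x) is a principal ideal of R. -/
/-!
Over a commutative ring the ideal presenting a cyclic module is recovered as its annihilator,
`Ann_R (R ⧸ I) = I`. Since `Rx ≅ R ⧸ Ann(x)`, an isomorphism `Rx ≅ R ⧸ (a)` forces `Ann(x) = (a)`.
-/

theorem Ideal.eq_of_quotient_linearEquiv {R : Type*} [CommRing R] {I J : Ideal R}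
    (e : (R ⧸ I) ≃ₗ[R] (R ⧸ J)) : I = J := by
  rw [← Ideal.annihilator_quotient (I := I), ← Ideal.annihilator_quotient (I := J),
    e.annihilator_eq]

theorem stmt_1_general (R : Type*) [CommRing R] (x : R)
    (hcp : ∃ a : R,
      Nonempty ((Ideal.span {x} : Ideal R) ≃ₗ[R] (R ⧸ Ideal.span {a}))) :
    (Ideal.torsionOf R R x).IsPrincipal := by
  obtain ⟨a, ⟨e⟩⟩ := hcp
  have hann : Ideal.torsionOf R R x = Ideal.span {a} :=
    Ideal.eq_of_quotient_linearEquiv ((Ideal.quotTorsionOfEquivSpanSingleton R R x).trans e)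
  exact hann ▸ ⟨a, rfl⟩

/-- Over a commutative semilocal ring, if `Rx` is cyclically presented then
`Ann(x)` is a principal ideal. -/
theorem stmt_1 (R : Type*) [CommRing R]
    (hsemilocal : {I : Ideal R | I.IsMaximal}.Finite) (x : R)
    (hcp : ∃ a : R,
      Nonempty ((Ideal.span {x} : Ideal R) ≃ₗ[R] (R ⧸ Ideal.span {a}))) :
    (Ideal.torsionOf R R x).IsPrincipal :=
  stmt_1_general R x hcp
end

section
/- Let R be a commutative ring in which every prime ideal is principal and the zero ideal is prime. Then R is a principal ideal domain. -/
/-- If every prime ideal of `R` is principal and the zero ideal is prime, then `R`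
is a principal ideal domain. -/
theorem stmt_4 (R : Type*) [CommRing R]
    (hprin : ∀ P : Ideal R, P.IsPrime → P.IsPrincipal)
    (hbot : (⊥ : Ideal R).IsPrime) :
    IsDomain R ∧ IsPrincipalIdealRing R :=
  ⟨IsDomain.of_bot_isPrime R, IsPrincipalIdealRing.of_prime hprin⟩
end

section
/- Let R be a commutative ring and suppose a prime ideal P satisfies P ⊆ M where M = Rx ⊕ L for an ideal L ⊆ P and x ∉ P with x not nilpotent. Then P = (P ∩ Rx) ⊕ L and P ∩ Rx = P·x. -/
/-- If a prime `P` is contained in `M = Rx ⊕ L` with `L ⊆ P`, `x ∉ P` and `x` not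
nilpotent, then `P = (P ∩ Rx) ⊕ L` and `P ∩ Rx = P·x`. -/
theorem stmt_8 (R : Type*) [CommRing R] (P M L : Ideal R) (x : R)
    (hP : P.IsPrime) (hle : P ≤ M)
    (hsum : M = Ideal.span {x} ⊔ L) (hdisj : Ideal.span {x} ⊓ L = ⊥)
    (hLP : L ≤ P) (hxP : x ∉ P) (hnil : ¬ IsNilpotent x) :
    P = (P ⊓ Ideal.span {x}) ⊔ L ∧ (P ⊓ Ideal.span {x}) ⊓ L = ⊥ ∧
      P ⊓ Ideal.span {x} = P * Ideal.span {x} := by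
  refine ⟨?_, ?_, ?_⟩
  · apply le_antisymm
    · intro p hp
      have hpM : p ∈ Ideal.span {x} ⊔ L := by rw [← hsum]; exact hle hp
      rcases Submodule.mem_sup.mp hpM with ⟨a, ha, l, hl, rfl⟩
      have haP : a ∈ P := by
        have : a = (a + l) - l := by ring
        rw [this]; exact sub_mem hp (hLP hl)
      exact Submodule.add_mem_sup (⟨haP, ha⟩ : a ∈ P ⊓ Ideal.span {x}) hl
    · exact sup_le inf_le_left hLP
  · rw [← le_bot_iff, ← hdisj]
    exact inf_le_inf_right _ inf_le_right
  · apply le_antisymm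
    · rintro p ⟨hpP, hpx⟩
      rcases Ideal.mem_span_singleton'.mp hpx with ⟨r, rfl⟩
      have hrP : r ∈ P := by
        rcases hP.mem_or_mem hpP with h | h
        · exact h
        · exact absurd h hxP
      exact Ideal.mul_mem_mul hrP (Ideal.mem_span_singleton_self x)
    · exact le_inf Ideal.mul_le_left Ideal.mul_le_right
end

section
/- Let R be a commutative ring with two distinct maximal ideals M_1 and M_2 such that M_1 = P_{1,1} ⊕ P_{2,1} and M_2 = P_{1,2} ⊕ P_{2,2}, where all P_{i,j} are nonzero prime ideals of R. Then a contradiction follows; i.e., no commutative ring has two distinct maximal ideals each decomposing as a direct sum of two nonzero prime ideals in this way. -/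
/-!
The two summands of `M₁` meet in zero, so each prime summand of `M₂` contains one of
them. They cannot both contain the same one, as the summands of `M₂` meet in zero;
hence `M₁ ≤ M₂`, which contradicts maximality.
-/

namespace Ideal

variable {R : Type*} [CommRing R]

theorem sup_le_sup_of_inf_le_inf_of_isPrime {I J P Q : Ideal R} (hP : P.IsPrime)
    (hQ : Q.IsPrime) (hIJ : I ⊓ J ≤ P ⊓ Q) (hI : ¬I ≤ P ⊓ Q) (hJ : ¬J ≤ P ⊓ Q) :
    I ⊔ J ≤ P ⊔ Q := by
  have hIJP : I ≤ P ∨ J ≤ P := hP.inf_le.mp (hIJ.trans inf_le_left)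
  have hIJQ : I ≤ Q ∨ J ≤ Q := hQ.inf_le.mp (hIJ.trans inf_le_right)
  rcases hIJP with hIP | hJP <;> rcases hIJQ with hIQ | hJQ
  · exact absurd (le_inf hIP hIQ) hI
  · exact sup_le (hIP.trans le_sup_left) (hJQ.trans le_sup_right)
  · exact sup_le (hIQ.trans le_sup_right) (hJP.trans le_sup_left)
  · exact absurd (le_inf hJP hJQ) hJ

end Ideal

theorem stmt_10_general (R : Type*) [CommRing R] (M₁ M₂ P₁₁ P₂₁ P₁₂ P₂₂ : Ideal R)
    (hM₁ : M₁.IsMaximal) (hM₂ : M₂.IsMaximal) (hMne : M₁ ≠ M₂)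
    (hP₁₂ : P₁₂.IsPrime) (hP₂₂ : P₂₂.IsPrime)
    (hne₁₁ : P₁₁ ≠ ⊥) (hne₂₁ : P₂₁ ≠ ⊥)
    (hsum₁ : M₁ = P₁₁ ⊔ P₂₁) (hdisj₁ : P₁₁ ⊓ P₂₁ = ⊥)
    (hsum₂ : M₂ = P₁₂ ⊔ P₂₂) (hdisj₂ : P₁₂ ⊓ P₂₂ = ⊥) :
    False := by
  have hle : M₁ ≤ M₂ := by
    rw [hsum₁, hsum₂]
    refine Ideal.sup_le_sup_of_inf_le_inf_of_isPrime hP₁₂ hP₂₂ (by simp [hdisj₁]) ?_ ?_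
    · simpa [hdisj₂] using hne₁₁
    · simpa [hdisj₂] using hne₂₁
  exact hMne (hM₁.eq_of_le hM₂.ne_top hle)

/-- No commutative ring has two distinct maximal ideals each of which decomposes as
an internal direct sum of two nonzero prime ideals. -/
theorem stmt_10 (R : Type*) [CommRing R] (M₁ M₂ P₁₁ P₂₁ P₁₂ P₂₂ : Ideal R)
    (hM₁ : M₁.IsMaximal) (hM₂ : M₂.IsMaximal) (hMne : M₁ ≠ M₂)
    (hP₁₁ : P₁₁.IsPrime) (hP₂₁ : P₂₁.IsPrime) (hP₁₂ : P₁₂.IsPrime) (hP₂₂ : P₂₂.IsPrime)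
    (hne₁₁ : P₁₁ ≠ ⊥) (hne₂₁ : P₂₁ ≠ ⊥) (hne₁₂ : P₁₂ ≠ ⊥) (hne₂₂ : P₂₂ ≠ ⊥)
    (hsum₁ : M₁ = P₁₁ ⊔ P₂₁) (hdisj₁ : P₁₁ ⊓ P₂₁ = ⊥)
    (hsum₂ : M₂ = P₁₂ ⊔ P₂₂) (hdisj₂ : P₁₂ ⊓ P₂₂ = ⊥) :
    False :=
  stmt_10_general R M₁ M₂ P₁₁ P₂₁ P₁₂ P₂₂ hM₁ hM₂ hMne hP₁₂ hP₂₂ hne₁₁ hne₂₁ hsum₁ hdisj₁ hsum₂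
    hdisj₂
end

section
/- Let F be a field and R = F[[X,Y]]/(XY). Then R is a local ring whose maximal ideal M satisfies M = Rx ⊕ Ry (internal direct sum), where x and y are the images of X and Y, and x, y are not nilpotent. -/
set_option synthInstance.maxHeartbeats 1000000

open MvPowerSeries

section Aux

variable {F : Type*} [Field F]

local notation "P" => MvPowerSeries (Fin 2) F

private lemma aux_fin2_eq_zero (m : Fin 2 →₀ ℕ) (h0 : m 0 = 0) (h1 : m 1 = 0) : m = 0 := by
  ext i
  fin_cases i
  · exact h0
  · exact h1

private lemma aux_coeff_X_mul (s : Fin 2) (d : P) (m : Fin 2 →₀ ℕ) :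
    coeff (Finsupp.single s 1 + m) (X s * d) = coeff m d := by
  rw [X]
  simpa using coeff_add_monomial_mul (σ := Fin 2) (R := F) (Finsupp.single s 1) m d 1

/-- If `X 0 ∣ φ` and `X 1 ∣ φ` then `X 0 * X 1 ∣ φ`. -/
private lemma aux_XX_dvd {φ : P} (h0 : (X 0 : P) ∣ φ) (h1 : (X 1 : P) ∣ φ) :
    (X 0 : P) * X 1 ∣ φ := by
  obtain ⟨d, rfl⟩ := h1
  rw [X_dvd_iff] at h0
  have hd : (X 0 : P) ∣ d := by
    rw [X_dvd_iff]
    intro m hm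
    have := h0 (Finsupp.single 1 1 + m) (by
      simp [Finsupp.single_apply, hm])
    rwa [aux_coeff_X_mul] at this
  obtain ⟨e, rfl⟩ := hd
  exact ⟨e, by ring⟩

/-- Decomposition of a power series with zero constant term. -/
private lemma aux_decompose (f : P) (hf : constantCoeff f = 0) :
    ∃ g h : P, f = X 0 * g + X 1 * h := by
  classical
  let fy : P := fun m => if m 0 = 0 then coeff m f else 0
  have hcoeff : ∀ m, coeff m fy = if m 0 = 0 then coeff m f else 0 := fun m => rfl
  have h1 : (X 1 : P) ∣ fy := by
    rw [X_dvd_iff]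
    intro m hm
    rw [hcoeff]
    split_ifs with h
    · rw [aux_fin2_eq_zero m h hm, coeff_zero_eq_constantCoeff, hf]
    · rfl
  have h0 : (X 0 : P) ∣ f - fy := by
    rw [X_dvd_iff]
    intro m hm
    rw [map_sub, hcoeff, if_pos hm, sub_self]
  obtain ⟨g, hg⟩ := h0
  obtain ⟨h, hh⟩ := h1
  exact ⟨g, h, by rw [← hg, ← hh]; ring⟩

private lemma aux_constCoeff_XX : constantCoeff ((X 0 : P) * X 1) = 0 := by
  simp

private lemma aux_nonunit_mk (f : P) (hf : constantCoeff f = 0) :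
    ¬ IsUnit (Ideal.Quotient.mk (Ideal.span {(X 0 : P) * X 1}) f) := by
  rintro ⟨u, hu⟩
  obtain ⟨g, hg⟩ := Ideal.Quotient.mk_surjective (I := Ideal.span {(X 0 : P) * X 1})
    ((u⁻¹ : _) : _)
  have h1 : (Ideal.Quotient.mk (Ideal.span {(X 0 : P) * X 1})) (f * g - 1) = 0 := by
    rw [map_sub, map_mul, hg, ← hu, map_one]
    simp
  rw [Ideal.Quotient.eq_zero_iff_mem, Ideal.mem_span_singleton] at h1
  obtain ⟨c, hc⟩ := h1
  have := congrArg (constantCoeff) hc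
  simp [hf] at this

end Aux

open MvPowerSeries in
/-- `R = F[[X,Y]]/(XY)` is a local ring whose maximal ideal is the internal direct
sum `Rx ⊕ Ry`, where `x, y` are the (non-nilpotent) images of `X, Y`. -/
theorem stmt_13 (F : Type*) [Field F] :
    ∃ hloc : IsLocalRing
      (MvPowerSeries (Fin 2) F ⧸
        Ideal.span {(X 0 : MvPowerSeries (Fin 2) F) * X 1}),
      letI := hloc
      letI R := MvPowerSeries (Fin 2) F ⧸
        Ideal.span {(X 0 : MvPowerSeries (Fin 2) F) * X 1}
      letI x : R := Ideal.Quotient.mk _ (X 0)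
      letI y : R := Ideal.Quotient.mk _ (X 1)
      IsLocalRing.maximalIdeal R = Ideal.span {x} ⊔ Ideal.span {y} ∧
      Ideal.span {x} ⊓ Ideal.span {y} = (⊥ : Ideal R) ∧
      ¬ IsNilpotent x ∧ ¬ IsNilpotent y := by
  classical
  set P := MvPowerSeries (Fin 2) F
  set I : Ideal P := Ideal.span {(X 0 : P) * X 1} with hI
  have hI_ne_top : I ≠ ⊤ := by
    rw [hI, Ne, Ideal.span_singleton_eq_top]
    intro h
    rw [isUnit_iff_constantCoeff, aux_constCoeff_XX, isUnit_zero_iff] at h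
    exact one_ne_zero h.symm
  haveI : Nontrivial (P ⧸ I) := Ideal.Quotient.nontrivial_iff.mpr hI_ne_top
  have hloc : IsLocalRing (P ⧸ I) :=
    IsLocalRing.of_surjective' (Ideal.Quotient.mk I) Ideal.Quotient.mk_surjective
  refine ⟨hloc, ?_, ?_, ?_, ?_⟩
  · -- maximal ideal = span x ⊔ span y
    apply le_antisymm
    · intro a ha
      obtain ⟨f, rfl⟩ := Ideal.Quotient.mk_surjective a
      rw [IsLocalRing.mem_maximalIdeal, mem_nonunits_iff] at ha
      have hf : constantCoeff f = 0 := by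
        by_contra h
        exact ha (((isUnit_iff_constantCoeff (φ := f)).mpr (isUnit_iff_ne_zero.mpr h)).map (Ideal.Quotient.mk I))
      obtain ⟨g, h, rfl⟩ := aux_decompose f hf
      rw [map_add, map_mul, map_mul]
      exact Submodule.add_mem_sup
        (Ideal.mem_span_singleton.mpr ⟨_, rfl⟩)
        (Ideal.mem_span_singleton.mpr ⟨_, rfl⟩)
    · rw [sup_le_iff]
      constructor <;> rw [Ideal.span_le, Set.singleton_subset_iff] <;>
        rw [SetLike.mem_coe, IsLocalRing.mem_maximalIdeal, mem_nonunits_iff]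
      · exact aux_nonunit_mk (X 0) (by simp)
      · exact aux_nonunit_mk (X 1) (by simp)
  · -- trivial intersection
    rw [eq_bot_iff]
    rintro a ha
    rw [Ideal.mem_inf] at ha
    obtain ⟨h0, h1⟩ := ha
    rw [Ideal.mem_span_singleton'] at h0 h1
    obtain ⟨b, hb⟩ := h0
    obtain ⟨c, hc⟩ := h1
    obtain ⟨g, rfl⟩ := Ideal.Quotient.mk_surjective b
    obtain ⟨h, rfl⟩ := Ideal.Quotient.mk_surjective c
    have hdiff : ((X 0 : P) * X 1) ∣ (g * X 0 - h * X 1) := by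
      rw [← Ideal.mem_span_singleton, ← hI, ← Ideal.Quotient.eq_zero_iff_mem,
        map_sub, map_mul, map_mul, hb, hc, sub_self]
    obtain ⟨d, hd⟩ := hdiff
    have hdvd : ((X 0 : P) * X 1) ∣ g * X 0 := by
      apply aux_XX_dvd
      · exact ⟨g, mul_comm g _⟩
      · have : g * X 0 = h * X 1 + X 0 * X 1 * d := by
          rw [← hd]; ring
        rw [this]
        exact dvd_add ⟨h, mul_comm h _⟩ ⟨X 0 * d, by ring⟩
    rw [Submodule.mem_bot, ← hb, ← map_mul, Ideal.Quotient.eq_zero_iff_mem, hI,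
      Ideal.mem_span_singleton]
    exact hdvd
  · -- x not nilpotent
    rintro ⟨n, hn⟩
    rw [← map_pow, Ideal.Quotient.eq_zero_iff_mem, hI, Ideal.mem_span_singleton] at hn
    have h1 : (X 1 : P) ∣ (X 0 : P) ^ n := dvd_trans ⟨X 0, by ring⟩ hn
    rw [X_dvd_iff] at h1
    have := h1 (Finsupp.single 0 n) (by simp [Finsupp.single_apply])
    rw [X_pow_eq, coeff_monomial_same] at this
    exact one_ne_zero this
  · -- y not nilpotent
    rintro ⟨n, hn⟩
    rw [← map_pow, Ideal.Quotient.eq_zero_iff_mem, hI, Ideal.mem_span_singleton] at hn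
    have h1 : (X 0 : P) ∣ (X 1 : P) ^ n := dvd_trans ⟨X 1, by ring⟩ hn
    rw [X_dvd_iff] at h1
    have := h1 (Finsupp.single 1 n) (by simp [Finsupp.single_apply])
    rw [X_pow_eq, coeff_monomial_same] at this
    exact one_ne_zero this
end

section
/- Let R be a commutative semilocal ring. If I and J are ideals of R such that I ⊕ K ≅ J ⊕ K as R-modules for some finitely generated projective R-module K, and in particular if R ⊕ I ≅ R ⊕ J, then I ≅ J as R-modules. -/
open LinearMap in
/-- Semilocal stable range 1 (ideal version). -/
lemma sr_aux {R : Type*} [CommRing R]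
    (hfin : {I : Ideal R | I.IsMaximal}.Finite) (I : Ideal R) (a : R)
    (h : ∃ i ∈ I, ∃ r, i + r * a = 1) : ∃ i ∈ I, IsUnit (a + i) := by
  classical
  set S : Finset (Ideal R) := hfin.toFinset.filter (fun m => ¬ I ≤ m) with hSdef
  have hSmem : ∀ m ∈ S, m.IsMaximal ∧ ¬ I ≤ m := by
    intro m hm
    simp only [hSdef, Finset.mem_filter, Set.Finite.mem_toFinset, Set.mem_setOf_eq] at hm
    exact hm
  -- choose p
  have hp' : ∀ m : Ideal R, ∃ x, m ∈ S → x ∈ I ∧ x ∉ m := by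
    intro m
    by_cases hm : m ∈ S
    · obtain ⟨x, hx⟩ := SetLike.not_le_iff_exists.1 (hSmem m hm).2
      exact ⟨x, fun _ => hx⟩
    · exact ⟨0, fun h' => absurd h' hm⟩
  choose p hp using hp'
  -- choose q
  have hq' : ∀ m m' : Ideal R, ∃ x, m ∈ S → m' ∈ S → m ≠ m' → x ∈ m' ∧ x ∉ m := by
    intro m m'
    by_cases hc : m ∈ S ∧ m' ∈ S ∧ m ≠ m'
    · obtain ⟨h1, h2, h3⟩ := hc
      have hnle : ¬ m' ≤ m := by
        intro hle
        exact h3 ((hSmem m' h2).1.eq_of_le (hSmem m h1).1.ne_top hle).symm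
      obtain ⟨x, hx⟩ := SetLike.not_le_iff_exists.1 hnle
      exact ⟨x, fun _ _ _ => hx⟩
    · exact ⟨0, fun h1 h2 h3 => absurd ⟨h1, h2, h3⟩ hc⟩
  choose q hq using hq'
  set e : Ideal R → R := fun m => p m * ∏ m' ∈ S.erase m, q m m' with he_def
  have heI : ∀ m ∈ S, e m ∈ I := fun m hm => I.mul_mem_right _ ((hp m hm).1)
  have heNot : ∀ m ∈ S, e m ∉ m := by
    intro m hm hmem
    have hprime : m.IsPrime := (hSmem m hm).1.isPrime
    rcases (hprime.mem_or_mem hmem) with h1 | h1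
    · exact (hp m hm).2 h1
    · have := hprime
      rw [Ideal.IsPrime.prod_mem_iff] at h1
      obtain ⟨m', hm', hmm'⟩ := h1
      exact (hq m m' hm (Finset.mem_of_mem_erase hm')
        (Ne.symm (Finset.ne_of_mem_erase hm'))).2 hmm'
  have heMem : ∀ m ∈ S, ∀ m' ∈ S, m ≠ m' → e m' ∈ m := by
    intro m hm m' hm' hne
    have hdvd : q m' m ∣ ∏ x ∈ S.erase m', q m' x :=
      Finset.dvd_prod_of_mem _ (Finset.mem_erase.2 ⟨hne, hm⟩)
    obtain ⟨c, hc⟩ := hdvd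
    have : (∏ x ∈ S.erase m', q m' x) ∈ m := by
      rw [hc]; exact m.mul_mem_right _ ((hq m' m hm' hm hne.symm).1)
    exact m.mul_mem_left _ this
  -- choose c
  have hc' : ∀ m : Ideal R, ∃ c, m ∈ S → (1 - a) - c * e m ∈ m := by
    intro m
    by_cases hm : m ∈ S
    · obtain ⟨y, i, hi, hyi⟩ := (hSmem m hm).1.exists_inv (heNot m hm)
      refine ⟨(1 - a) * y, fun _ => ?_⟩
      have h2 : (1 - a) - (1 - a) * y * e m = (1 - a) * i := by
        linear_combination (a - 1) * hyi
      rw [h2]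
      exact m.mul_mem_left _ hi
    · exact ⟨0, fun h' => absurd h' hm⟩
  choose c hc using hc'
  refine ⟨∑ m ∈ S, c m * e m, Ideal.sum_mem _ (fun m hm => I.mul_mem_left _ (heI m hm)), ?_⟩
  set i := ∑ m ∈ S, c m * e m with hi_def
  by_contra hnu
  obtain ⟨m, hmmax, hmem⟩ := exists_max_ideal_of_mem_nonunits (mem_nonunits_iff.2 hnu)
  obtain ⟨i₀, hi₀, r, hr⟩ := h
  by_cases hIm : I ≤ m
  · -- then a ∉ m but i ∈ m
    have ha : a ∉ m := by
      intro ham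
      have : (1 : R) ∈ m := by
        rw [← hr]; exact m.add_mem (hIm hi₀) (m.mul_mem_left _ ham)
      exact hmmax.ne_top (Ideal.eq_top_iff_one m |>.2 this)
    have him : i ∈ m := hIm (Ideal.sum_mem _ (fun m' hm' => I.mul_mem_left _ (heI m' hm')))
    exact ha (by simpa using m.sub_mem hmem him)
  · have hmS : m ∈ S := by
      simp only [hSdef, Finset.mem_filter, Set.Finite.mem_toFinset, Set.mem_setOf_eq]
      exact ⟨hmmax, hIm⟩
    -- a + i ≡ 1 mod m
    have hsum : i - c m * e m ∈ m := by
      rw [hi_def, ← Finset.sum_erase_add S _ hmS, add_sub_cancel_right]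
      exact Ideal.sum_mem _ (fun m' hm' =>
        m.mul_mem_left _ (heMem m (by exact hmS) m' (Finset.mem_of_mem_erase hm')
          (Ne.symm (Finset.ne_of_mem_erase hm'))))
    have h1m : (1 : R) ∈ m := by
      have heq : (1 : R) = ((a + i) - (i - c m * e m)) + ((1 - a) - c m * e m) := by ring
      rw [heq]
      exact m.add_mem (m.sub_mem hmem hsum) (hc m hmS)
    exact hmmax.ne_top (Ideal.eq_top_iff_one m |>.2 h1m)

open LinearMap in
/-- Kernel of a surjection `M × R → R` over a semilocal ring is isomorphic to `M`. -/
lemma ker_aux {R : Type*} [CommRing R]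
    (hfin : {I : Ideal R | I.IsMaximal}.Finite)
    {M : Type*} [AddCommGroup M] [Module R M]
    (f : M × R →ₗ[R] R) (hf : Function.Surjective f) :
    Nonempty ((LinearMap.ker f) ≃ₗ[R] M) := by
  classical
  set g : M →ₗ[R] R := f ∘ₗ LinearMap.inl R M R with hg
  set a : R := f (0, 1) with ha
  have key : ∀ x : M, ∀ r : R, f (x, r) = g x + r * a := by
    intro x r
    have hxr : (x, r) = (x, 0) + r • ((0 : M), (1 : R)) := by
      simp [Prod.ext_iff]
    rw [hxr, map_add, map_smul, smul_eq_mul]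
    rfl
  obtain ⟨⟨m₁, r₁⟩, h₁⟩ := hf 1
  have hsr := sr_aux hfin (LinearMap.range g) a
    ⟨g m₁, LinearMap.mem_range_self g m₁, r₁, by rw [← key]; exact h₁⟩
  obtain ⟨i, hi, hu⟩ := hsr
  obtain ⟨m₀, rfl⟩ := hi
  obtain ⟨u, hu'⟩ := hu
  -- backward map : ker f → M, (x, r) ↦ x - r • m₀
  set B : (LinearMap.ker f) →ₗ[R] M :=
    (LinearMap.fst R M R - (LinearMap.snd R M R).smulRight m₀) ∘ₗ (LinearMap.ker f).subtype
    with hB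
  have hBapp : ∀ z : LinearMap.ker f, B z = (z : M × R).1 - (z : M × R).2 • m₀ := fun z => rfl
  -- forward map
  set s : M →ₗ[R] R := ((↑u⁻¹ : R) • g) with hs
  have hsapp : ∀ x : M, s x = (↑u⁻¹ : R) * g x := fun x => rfl
  set F₀ : M →ₗ[R] M × R := LinearMap.prod (LinearMap.id - s.smulRight m₀) (-s) with hF₀
  have hF₀mem : ∀ x : M, F₀ x ∈ LinearMap.ker f := by
    intro x
    rw [LinearMap.mem_ker]
    have : F₀ x = (x - (s x) • m₀, -(s x)) := rfl
    rw [this, key, map_sub, map_smul, smul_eq_mul, hsapp]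
    have huu : (↑u⁻¹ : R) * ↑u = 1 := u.inv_mul
    have hgu : (a + g m₀) = ↑u := hu'.symm
    calc g x - (↑u⁻¹ : R) * g x * g m₀ + -((↑u⁻¹ : R) * g x) * a
        = g x - ((↑u⁻¹ : R) * g x) * (a + g m₀) := by ring
      _ = g x - ((↑u⁻¹ : R) * ↑u) * g x := by rw [hgu]; ring
      _ = 0 := by rw [huu]; ring
  set F : M →ₗ[R] LinearMap.ker f := F₀.codRestrict (LinearMap.ker f) hF₀mem with hF
  refine ⟨LinearEquiv.ofLinear B F ?_ ?_⟩
  · -- B ∘ F = id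
    ext x
    have : ((F x : M × R)) = (x - (s x) • m₀, -(s x)) := rfl
    rw [LinearMap.comp_apply, hBapp, this, LinearMap.id_apply]
    simp only
    module
  · -- F ∘ B = id
    refine LinearMap.ext fun z => ?_
    obtain ⟨⟨x, r⟩, hz⟩ := z
    have hker : g x + r * a = 0 := by
      rw [← key]; exact hz
    apply Subtype.ext
    have hgB : g (x - r • m₀) = -(r * ↑u) := by
      rw [map_sub, map_smul, smul_eq_mul, hu']
      linear_combination hker
    have hsB : s (x - r • m₀) = -r := by
      rw [hsapp, hgB]
      have huu : (↑u⁻¹ : R) * ↑u = 1 := u.inv_mul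
      calc (↑u⁻¹ : R) * -(r * ↑u) = -(((↑u⁻¹ : R) * ↑u) * r) := by ring
        _ = -r := by rw [huu]; ring
    show F₀ (x - r • m₀) = (x, r)
    have h1 : F₀ (x - r • m₀) =
        ((x - r • m₀) - (s (x - r • m₀)) • m₀, -(s (x - r • m₀))) := rfl
    rw [h1, hsB, Prod.mk.injEq]
    exact ⟨by module, by rw [neg_neg]⟩

/-- Cancellation of `R` over a semilocal ring. -/
lemma cancel_R {R : Type*} [CommRing R]
    (hfin : {I : Ideal R | I.IsMaximal}.Finite)
    {M N : Type*} [AddCommGroup M] [Module R M] [AddCommGroup N] [Module R N]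
    (e : (M × R) ≃ₗ[R] (N × R)) : Nonempty (M ≃ₗ[R] N) := by
  set f : M × R →ₗ[R] R := (LinearMap.snd R N R) ∘ₗ e.toLinearMap with hf
  have hfsurj : Function.Surjective f := by
    intro r
    exact ⟨e.symm (0, r), by simp [hf]⟩
  obtain ⟨e₁⟩ := ker_aux hfin f hfsurj
  obtain ⟨e₂⟩ := ker_aux hfin (LinearMap.snd R N R) (fun r => ⟨(0, r), rfl⟩)
  have hmap : (LinearMap.ker f).map (e : (M × R) →ₗ[R] (N × R))
      = LinearMap.ker (LinearMap.snd R N R) := by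
    rw [hf, LinearMap.ker_comp]
    exact Submodule.map_comap_eq_of_surjective e.surjective _
  exact ⟨e₁.symm.trans ((LinearEquiv.ofSubmodules e _ _ hmap).trans e₂)⟩

/-- The linear equivalence `(Fin (n+1) → R) ≃ R × (Fin n → R)`. -/
def finSuccLEquiv (R : Type*) [CommRing R] (n : ℕ) :
    (Fin (n + 1) → R) ≃ₗ[R] R × (Fin n → R) :=
  { (Fin.consEquiv (fun _ : Fin (n + 1) => R)).symm with
    map_add' := fun _ _ => rfl
    map_smul' := fun _ _ => rfl }


/-- `P × (Fin 0 → R) ≃ P`. -/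
def trivEquiv (R : Type*) [CommRing R] (P : Type*) [AddCommGroup P] [Module R P] :
    (P × (Fin 0 → R)) ≃ₗ[R] P :=
  LinearEquiv.ofLinear (LinearMap.fst R P _) (LinearMap.inl R P _)
    (by ext x; rfl)
    (by refine LinearMap.ext fun z => ?_
        obtain ⟨x, v⟩ := z
        simp only [LinearMap.comp_apply, LinearMap.fst_apply, LinearMap.inl_apply,
          LinearMap.id_apply]
        exact Prod.ext rfl (Subsingleton.elim _ _))

/-- Reassociation of `P × (Fin (n+1) → R)`. -/
def assocEquiv (R : Type*) [CommRing R] (P : Type*) [AddCommGroup P] [Module R P] (n : ℕ) :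
    (P × (Fin (n+1) → R)) ≃ₗ[R] ((P × (Fin n → R)) × R) :=
  ((LinearEquiv.refl R P).prodCongr
      ((finSuccLEquiv R n).trans (LinearEquiv.prodComm R R (Fin n → R)))).trans
    (LinearEquiv.prodAssoc R P (Fin n → R) R).symm

/-- Cancellation of finite free modules over a semilocal ring. -/
lemma cancel_free {R : Type*} [CommRing R]
    (hfin : {I : Ideal R | I.IsMaximal}.Finite) (n : ℕ)
    {M N : Type*} [AddCommGroup M] [Module R M] [AddCommGroup N] [Module R N]
    (e : (M × (Fin n → R)) ≃ₗ[R] (N × (Fin n → R))) : Nonempty (M ≃ₗ[R] N) := by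
  induction n generalizing M N with
  | zero =>
      exact ⟨((trivEquiv R M).symm.trans e).trans (trivEquiv R N)⟩
  | succ n ih =>
      have e' := ((assocEquiv R M n).symm.trans e).trans (assocEquiv R N n)
      obtain ⟨e''⟩ := cancel_R hfin e'
      exact ih e''

/-- Over a commutative semilocal ring, finitely generated projective modules cancel
from direct sums: if `I ⊕ K ≅ J ⊕ K` for ideals `I, J` and a finitely generated
projective module `K` (in particular `K = R`), then `I ≅ J`. -/
theorem stmt_19 (R : Type*) [CommRing R]
    (hsemilocal : {I : Ideal R | I.IsMaximal}.Finite)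
    (I J : Ideal R) (K : Type*) [AddCommGroup K] [Module R K]
    [Module.Finite R K] [Module.Projective R K]
    (h : Nonempty ((I × K) ≃ₗ[R] (J × K))) :
    Nonempty ((I : Ideal R) ≃ₗ[R] J) := by
  obtain ⟨e⟩ := h
  obtain ⟨n, π, hπ⟩ := Module.Finite.exists_fin' R K
  obtain ⟨s, hs⟩ := Module.projective_lifting_property π LinearMap.id hπ
  have hsapp : ∀ k : K, π (s k) = k := fun k => congrArg (fun f => f k) (congrArg DFunLike.coe hs)
  -- (Fin n → R) ≃ K × ker π
  have hmem : ∀ x : Fin n → R, x - s (π x) ∈ LinearMap.ker π := by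
    intro x
    rw [LinearMap.mem_ker, map_sub, hsapp, sub_self]
  set Fwd : (Fin n → R) →ₗ[R] K × (LinearMap.ker π) :=
    LinearMap.prod π ((LinearMap.id - s ∘ₗ π).codRestrict (LinearMap.ker π)
      (fun x => hmem x)) with hFwd
  set Bwd : (K × (LinearMap.ker π)) →ₗ[R] (Fin n → R) :=
    LinearMap.coprod s (LinearMap.ker π).subtype with hBwd
  have hE1 : Bwd ∘ₗ Fwd = LinearMap.id := by
    refine LinearMap.ext fun x => ?_
    show s (π x) + (x - s (π x)) = x
    module
  have hE2 : Fwd ∘ₗ Bwd = LinearMap.id := by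
    refine LinearMap.ext fun z => ?_
    obtain ⟨k, ⟨y, hy⟩⟩ := z
    rw [LinearMap.mem_ker] at hy
    have h1 : π (s k + y) = k := by rw [map_add, hsapp, hy, add_zero]
    refine Prod.ext ?_ (Subtype.ext ?_)
    · show π (s k + y) = k
      exact h1
    · show (s k + y) - s (π (s k + y)) = y
      rw [h1]
      module
  have E : (Fin n → R) ≃ₗ[R] K × (LinearMap.ker π) := LinearEquiv.ofLinear Fwd Bwd hE2 hE1
  set L := LinearMap.ker π
  have big : (↥I × (Fin n → R)) ≃ₗ[R] (↥J × (Fin n → R)) :=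
    (((LinearEquiv.refl R ↥I).prodCongr E).trans
      (((LinearEquiv.prodAssoc R ↥I K L).symm.trans
        (e.prodCongr (LinearEquiv.refl R L))).trans
        (LinearEquiv.prodAssoc R ↥J K L))).trans
      ((LinearEquiv.refl R ↥J).prodCongr E.symm)
  exact cancel_free hsemilocal n big
end
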